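/- Fix d ∈ ℝ with d ∉ {0,1,2}, and constants C₂, C₃ with C₃ ≠ 0. On U = {(u¹,u²,u³) ∈ ℝ³ : u² > 0}, let η(u) be the symmetric matrix (u²)^{−d}·[[0, C₂ − C₃d·u³/u², C₃],[C₂ − C₃d·u³/u², C₃, 0],[C₃, 0, 0]], and define x : U → ℝ³ by x¹ = u¹, x² = (u²)^{−d}u³ + C₂(u²)^{1−d}/(C₃(1−d)), x³ = (2/(2−d))(u²)^{(2−d)/2}. Let J(u) be the Jacobian matrix of x at u and let G be the constant matrix [[0,C₃,0],[C₃,0,0],[0,0,C₃]]. Then J(u)ᵀ G J(u) = η(u) for all u ∈ U; that is, (x¹,x²,x³) are flat coordinates for the metric η. -/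

import Mathlib

/-! The Jacobian of `x` is `[[1,0,0],[0,∂₂x²,(u²)^{-d}],[0,(u²)^{-d/2},0]]`, and for a matrix of
this shape `JᵀGJ` only involves `C₃∂₂x²`, `C₃(u²)^{-d}` and `C₃((u²)^{-d/2})²`. Since
`∂₂x² = (u²)^{-d}(C₂/C₃ - d u³/u²)`, these are exactly the entries of `η`. -/

open Matrix

/-- Partial derivative of `g : (Fin n → ℝ) → ℝ` with respect to the `i`-th coordinate. -/
noncomputable def pd {n : ℕ} (g : (Fin n → ℝ) → ℝ) (i : Fin n) (u : Fin n → ℝ) : ℝ :=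
  deriv (fun t => g (Function.update u i t)) (u i)

/-- The flat coordinates `x¹ = u¹`, `x² = (u²)^{−d}u³ + C₂(u²)^{1−d}/(C₃(1−d))`,
`x³ = (2/(2−d))(u²)^{(2−d)/2}` (0-based indices: `u 0 = u¹`, `u 1 = u²`, `u 2 = u³`). -/
noncomputable def flatCoord3 (d C₂ C₃ : ℝ) (u : Fin 3 → ℝ) : Fin 3 → ℝ :=
  ![u 0,
    (u 1) ^ (-d) * u 2 + C₂ * (u 1) ^ (1 - d) / (C₃ * (1 - d)),
    2 / (2 - d) * (u 1) ^ ((2 - d) / 2)]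

/-- The Jacobian matrix `J(u)ᵢⱼ = ∂xⁱ/∂uʲ` of `flatCoord3 d C₂ C₃` at `u`. -/
noncomputable def jac3 (d C₂ C₃ : ℝ) (u : Fin 3 → ℝ) : Matrix (Fin 3) (Fin 3) ℝ :=
  Matrix.of fun i j => pd (fun v => flatCoord3 d C₂ C₃ v i) j u

lemma pd_eq_of_hasDerivAt {n : ℕ} {g : (Fin n → ℝ) → ℝ} {i : Fin n} {u : Fin n → ℝ} {g' : ℝ}
    (h : HasDerivAt (fun t => g (Function.update u i t)) g' (u i)) : pd g i u = g' :=
  h.deriv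

lemma hasDerivAt_rpow_neg_mul_add {d t : ℝ} (w C₂ C₃ : ℝ) (hd : d ≠ 1) (ht : 0 < t) :
    HasDerivAt (fun s : ℝ => s ^ (-d) * w + C₂ * s ^ (1 - d) / (C₃ * (1 - d)))
      (t ^ (-d) * (C₂ / C₃ - d * w / t)) t := by
  have h1d : 1 - d ≠ 0 := sub_ne_zero.mpr hd.symm
  refine (((Real.hasDerivAt_rpow_const (p := -d) (Or.inl ht.ne')).mul_const w).add
    (((Real.hasDerivAt_rpow_const (p := 1 - d) (Or.inl ht.ne')).const_mul C₂).div_const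
      (C₃ * (1 - d)))).congr_deriv ?_
  rw [sub_sub_cancel_left, Real.rpow_sub_one ht.ne']
  field_simp
  ring

lemma hasDerivAt_two_div_mul_rpow {d t : ℝ} (hd : d ≠ 2) (ht : 0 < t) :
    HasDerivAt (fun s : ℝ => 2 / (2 - d) * s ^ ((2 - d) / 2)) (t ^ (-d / 2)) t := by
  have h2d : 2 - d ≠ 0 := sub_ne_zero.mpr hd.symm
  refine ((Real.hasDerivAt_rpow_const (Or.inl ht.ne')).const_mul _).congr_deriv ?_
  rw [show (2 - d) / 2 - 1 = -d / 2 by ring]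
  field_simp

lemma jac3_eq (d C₂ C₃ : ℝ) (hd1 : d ≠ 1) (hd2 : d ≠ 2) (u : Fin 3 → ℝ) (hu : 0 < u 1) :
    jac3 d C₂ C₃ u =
      !![1, 0, 0;
         0, u 1 ^ (-d) * (C₂ / C₃ - d * u 2 / u 1), u 1 ^ (-d);
         0, u 1 ^ (-d / 2), 0] := by
  ext i j
  rw [jac3, Matrix.of_apply]
  fin_cases i <;> fin_cases j <;> refine pd_eq_of_hasDerivAt ?_ <;>
    simp [flatCoord3, hasDerivAt_id', hasDerivAt_const, hasDerivAt_const_mul,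
      hasDerivAt_rpow_neg_mul_add _ _ _ hd1 hu, hasDerivAt_two_div_mul_rpow hd2 hu]

lemma transpose_mul_mul_fin_three_eq {R : Type*} [CommRing R] (a b c k : R) :
    !![1, 0, 0; 0, b, a; 0, c, 0]ᵀ * !![0, k, 0; k, 0, 0; 0, 0, k] * !![1, 0, 0; 0, b, a; 0, c, 0]
      = !![0, k * b, k * a; k * b, k * c ^ 2, 0; k * a, 0, 0] := by
  ext i j
  fin_cases i <;> fin_cases j <;> simp [Matrix.mul_apply, Fin.sum_univ_three] <;> ring

theorem stmt_10_general (d C₂ C₃ : ℝ) (hd1 : d ≠ 1) (hd2 : d ≠ 2)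
    (hC₃ : C₃ ≠ 0) :
    ∀ u : Fin 3 → ℝ, 0 < u 1 →
      (jac3 d C₂ C₃ u)ᵀ * !![0, C₃, 0; C₃, 0, 0; 0, 0, C₃] * jac3 d C₂ C₃ u
        = (u 1) ^ (-d) •
            !![0, C₂ - C₃ * d * u 2 / u 1, C₃;
               C₂ - C₃ * d * u 2 / u 1, C₃, 0;
               C₃, 0, 0] := by
  intro u hu
  have hsq : (u 1 ^ (-d / 2)) ^ 2 = u 1 ^ (-d) := by
    rw [← Real.rpow_natCast, ← Real.rpow_mul hu.le]
    norm_num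
  have hC₃b : C₃ * (u 1 ^ (-d) * (C₂ / C₃ - d * u 2 / u 1))
      = u 1 ^ (-d) * (C₂ - C₃ * d * u 2 / u 1) := by
    field_simp
  rw [jac3_eq d C₂ C₃ hd1 hd2 u hu, transpose_mul_mul_fin_three_eq, hsq, hC₃b]
  ext i j
  fin_cases i <;> fin_cases j <;> simp [mul_comm]

/-- for `d ∉ {0,1,2}` and `C₃ ≠ 0`, the coordinates `flatCoord3` are flat
coordinates for the metric
`η = (u²)^{−d}·[[0, C₂ − C₃d·u³/u², C₃],[C₂ − C₃d·u³/u², C₃, 0],[C₃, 0, 0]]`: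
`J(u)ᵀ G J(u) = η(u)` with `G = [[0,C₃,0],[C₃,0,0],[0,0,C₃]]`. -/
theorem stmt_10 (d C₂ C₃ : ℝ) (hd0 : d ≠ 0) (hd1 : d ≠ 1) (hd2 : d ≠ 2)
    (hC₃ : C₃ ≠ 0) :
    ∀ u : Fin 3 → ℝ, 0 < u 1 →
      (jac3 d C₂ C₃ u)ᵀ * !![0, C₃, 0; C₃, 0, 0; 0, 0, C₃] * jac3 d C₂ C₃ u
        = (u 1) ^ (-d) •
            !![0, C₂ - C₃ * d * u 2 / u 1, C₃;
               C₂ - C₃ * d * u 2 / u 1, C₃, 0;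
               C₃, 0, 0] :=
  stmt_10_general d C₂ C₃ hd1 hd2 hC₃
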